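/- arXiv:1310.1611 — 2 statements merged into one kernel-verified Lean document; each statement's English description precedes it below -/
import Mathlib

section
/- Let a : [0,∞) → ℝ be a smooth (C¹ suffices) function satisfying a'(r) + a(r)² ≤ C² for all r ≥ 0, where C > 0 is a constant. Then -C ≤ a(r) ≤ max{a(0), C} for all r ≥ 0. -/
/-!
Where `a > max (a 0) C` the inequality forces `a' < 0`, so `a` never crosses a constant level
`M > max (a 0) C`. Once `a r < -C`, the same argument keeps `a ≤ M < -C` for some `M`, and then the
positive function `-1/a` has derivative `a'/a² ≤ C²/M² - 1 < 0`, so it reaches `0` in finite time: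
`a` blows down to `-∞`.
-/

open Set

variable {f f' : ℝ → ℝ} {C s : ℝ}

theorem le_of_riccati_of_sq_lt {M : ℝ} (hf : ∀ x ≥ s, HasDerivAt f (f' x) x)
    (hineq : ∀ x ≥ s, f' x + f x ^ 2 ≤ C ^ 2) (hs : f s ≤ M) (hM : C ^ 2 < M ^ 2) :
    ∀ x ≥ s, f x ≤ M := by
  intro x hx
  refine image_le_of_deriv_right_lt_deriv_boundary' (B := fun _ ↦ M) (B' := 0)
    (fun y hy ↦ (hf y hy.1).continuousAt.continuousWithinAt)
    (fun y hy ↦ (hf y hy.1).hasDerivWithinAt) hs continuousOn_const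
    (fun y _ ↦ hasDerivWithinAt_const y _ M) (fun y hy hfy ↦ ?_) ⟨hx, le_rfl⟩
  have := hineq y hy.1
  rw [hfy] at this
  simp only [Pi.zero_apply]
  linarith

theorem le_max_of_riccati (hC : 0 ≤ C) (hf : ∀ x ≥ s, HasDerivAt f (f' x) x)
    (hineq : ∀ x ≥ s, f' x + f x ^ 2 ≤ C ^ 2) : ∀ x ≥ s, f x ≤ max (f s) C := by
  intro x hx
  refine le_of_forall_gt_imp_ge_of_dense fun M hM ↦
    le_of_riccati_of_sq_lt hf hineq ((le_max_left _ _).trans hM.le) ?_ x hx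
  exact pow_lt_pow_left₀ ((le_max_right _ _).trans_lt hM) hC two_ne_zero

theorem exists_nonpos_of_deriv_le_neg {g g' : ℝ → ℝ} {κ r : ℝ} (hκ : 0 < κ)
    (hg : ∀ x ≥ r, HasDerivAt g (g' x) x) (hg' : ∀ x ≥ r, g' x ≤ -κ) : ∃ x ≥ r, g x ≤ 0 := by
  have hlin : ∀ x ∈ Icc r (r + g r / κ), g x ≤ g r - κ * (x - r) :=
    image_le_of_deriv_right_le_deriv_boundary (B' := fun _ ↦ -κ)
      (fun y hy ↦ (hg y hy.1).continuousAt.continuousWithinAt)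
      (fun y hy ↦ (hg y hy.1).hasDerivWithinAt) (by simp) (by fun_prop)
      (fun y _ ↦ by
        simpa using
          (((hasDerivAt_id y).sub_const r).const_mul κ |>.const_sub (g r)).hasDerivWithinAt)
      (fun y hy ↦ hg' y hy.1)
  by_contra! hpos
  have hle : r ≤ r + g r / κ := le_add_of_nonneg_right (div_pos (hpos r le_rfl) hκ).le
  have hend := hlin _ ⟨hle, le_rfl⟩
  rw [add_sub_cancel_left, mul_div_cancel₀ _ hκ.ne', sub_self] at hend
  linarith [hpos _ hle]

theorem neg_le_of_riccati (hC : 0 ≤ C) (hf : ∀ x ≥ s, HasDerivAt f (f' x) x)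
    (hineq : ∀ x ≥ s, f' x + f x ^ 2 ≤ C ^ 2) : ∀ x ≥ s, -C ≤ f x := by
  intro r hr
  by_contra! hlt
  obtain ⟨M, hrM, hMC⟩ := exists_between hlt
  have hsq : C ^ 2 < M ^ 2 := by nlinarith
  have hfM : ∀ x ≥ r, f x ≤ M :=
    le_of_riccati_of_sq_lt (fun x hx ↦ hf x (hr.trans hx)) (fun x hx ↦ hineq x (hr.trans hx))
      hrM.le hsq
  have hf0 : ∀ x ≥ r, f x < 0 := fun x hx ↦ by linarith [hfM x hx]
  have hMf : ∀ x ≥ r, M ^ 2 ≤ f x ^ 2 := fun x hx ↦ by nlinarith [hfM x hx]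
  have hM0 : 0 < M ^ 2 := (sq_nonneg C).trans_lt hsq
  have hrate : ∀ x ≥ r, -(-f' x / f x ^ 2) ≤ -(1 - C ^ 2 / M ^ 2) := fun x hx ↦ by
    have hfx : 0 < f x ^ 2 := hM0.trans_le (hMf x hx)
    calc -(-f' x / f x ^ 2) = f' x / f x ^ 2 := by ring
      _ ≤ (C ^ 2 - f x ^ 2) / f x ^ 2 := by gcongr; linarith [hineq x (hr.trans hx)]
      _ = C ^ 2 / f x ^ 2 - 1 := by rw [sub_div, div_self hfx.ne']
      _ ≤ C ^ 2 / M ^ 2 - 1 := by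
        gcongr ?_ - 1; exact div_le_div_of_nonneg_left (sq_nonneg C) hM0 (hMf x hx)
      _ = -(1 - C ^ 2 / M ^ 2) := by ring
  obtain ⟨x, hx, hgx⟩ := exists_nonpos_of_deriv_le_neg (g := fun y ↦ -(f y)⁻¹)
    (by rw [sub_pos, div_lt_one hM0]; exact hsq)
    (fun x hx ↦ ((hf x (hr.trans hx)).fun_inv (hf0 x hx).ne).fun_neg) hrate
  linarith [inv_lt_zero.mpr (hf0 x hx)]

/-- Riccati differential inequality comparison, `C > 0` case:
if `a' + a² ≤ C²` on `[0,∞)` then `-C ≤ a ≤ max (a 0) C` on `[0,∞)`. -/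
theorem riccati_ineq_bound (a : ℝ → ℝ) (C : ℝ) (hC : 0 < C)
    (hsmooth : ∀ r ∈ Set.Ici (0 : ℝ), ContDiffAt ℝ 1 a r)
    (hineq : ∀ r ≥ (0 : ℝ), deriv a r + (a r) ^ 2 ≤ C ^ 2) :
    ∀ r ≥ (0 : ℝ), -C ≤ a r ∧ a r ≤ max (a 0) C := by
  have hderiv : ∀ r ≥ (0 : ℝ), HasDerivAt a (deriv a r) r := fun r hr ↦
    ((hsmooth r hr).differentiableAt one_ne_zero).hasDerivAt
  exact fun r hr ↦ ⟨neg_le_of_riccati hC.le hderiv hineq r hr,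
    le_max_of_riccati hC.le hderiv hineq r hr⟩
end

section
/- Let a : [0,∞) → ℝ be a smooth (C¹ suffices) function satisfying a'(r) + a(r)² ≤ 0 for all r ≥ 0. Then 0 ≤ a(r) ≤ a(0) for all r ≥ 0. -/
/-!
Since `a' ≤ -a² ≤ 0`, `a` is antitone, which gives `a r ≤ a 0`. If `a` took a negative value
`a r₀`, it would stay negative beyond `r₀`, and there `(1/a)' = -a'/a² ≥ 1`; so `1/a` would
reach `0` from below before time `r₀ - 1/a(r₀)`, i.e. `a` blows up to `-∞` in finite time.
-/

open Set

section RiccatiInequality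

variable {f : ℝ → ℝ} {D : Set ℝ}

theorem antitoneOn_of_deriv_add_sq_nonpos (hD : Convex ℝ D)
    (hf : ∀ x ∈ D, DifferentiableAt ℝ f x) (hineq : ∀ x ∈ D, deriv f x + f x ^ 2 ≤ 0) :
    AntitoneOn f D := by
  refine antitoneOn_of_deriv_nonpos hD
    (fun x hx => (hf x hx).continuousAt.continuousWithinAt)
    (fun x hx => (hf x (interior_subset hx)).differentiableWithinAt) fun x hx => ?_
  nlinarith [hineq x (interior_subset hx), sq_nonneg (f x)]

theorem hasDerivAt_inv_sub_id {x : ℝ} (hf : DifferentiableAt ℝ f x) (hfx : f x ≠ 0) :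
    HasDerivAt (fun y => (f y)⁻¹ - y) (-(deriv f x + f x ^ 2) / f x ^ 2) x := by
  refine ((hf.hasDerivAt.inv hfx).sub (hasDerivAt_id x)).congr_deriv ?_
  field_simp
  ring

theorem monotoneOn_inv_sub_id_of_deriv_add_sq_nonpos (hD : Convex ℝ D)
    (hf : ∀ x ∈ D, DifferentiableAt ℝ f x) (hf0 : ∀ x ∈ D, f x ≠ 0)
    (hineq : ∀ x ∈ D, deriv f x + f x ^ 2 ≤ 0) :
    MonotoneOn (fun y => (f y)⁻¹ - y) D := by
  have hderiv x (hx : x ∈ D) := hasDerivAt_inv_sub_id (hf x hx) (hf0 x hx)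
  refine monotoneOn_of_deriv_nonneg hD
    (fun x hx => (hderiv x hx).continuousAt.continuousWithinAt)
    (fun x hx => (hderiv x (interior_subset hx)).differentiableAt.differentiableWithinAt)
    fun x hx => ?_
  rw [(hderiv x (interior_subset hx)).deriv]
  exact div_nonneg (neg_nonneg.mpr (hineq x (interior_subset hx))) (sq_nonneg _)

theorem exists_nonneg_of_deriv_add_sq_nonpos {t : ℝ}
    (hf : ∀ x ∈ Ici t, DifferentiableAt ℝ f x) (hineq : ∀ x ∈ Ici t, deriv f x + f x ^ 2 ≤ 0) :
    ∃ s ∈ Ici t, 0 ≤ f s := by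
  by_contra! hneg
  have hmono := monotoneOn_inv_sub_id_of_deriv_add_sq_nonpos (convex_Ici t) hf
    (fun x hx => (hneg x hx).ne) hineq
  have ht : (f t)⁻¹ < 0 := inv_lt_zero.mpr (hneg t self_mem_Ici)
  set s := t - (f t)⁻¹ + 1
  have hs : s ∈ Ici t := by simp only [s, mem_Ici]; linarith
  have hle : (f t)⁻¹ - t ≤ (f s)⁻¹ - s := hmono self_mem_Ici hs (by simpa using hs)
  have hfs : (f s)⁻¹ < 0 := inv_lt_zero.mpr (hneg s hs)
  linarith

end RiccatiInequality

/-- Riccati differential inequality comparison, `C = 0` case: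
if `a' + a² ≤ 0` on `[0,∞)` then `0 ≤ a ≤ a 0` on `[0,∞)`. -/
theorem riccati_ineq_bound_zero (a : ℝ → ℝ)
    (hsmooth : ∀ r ∈ Set.Ici (0 : ℝ), ContDiffAt ℝ 1 a r)
    (hineq : ∀ r ≥ (0 : ℝ), deriv a r + (a r) ^ 2 ≤ 0) :
    ∀ r ≥ (0 : ℝ), 0 ≤ a r ∧ a r ≤ a 0 := by
  have hdiff : ∀ r ∈ Ici (0 : ℝ), DifferentiableAt ℝ a r := fun r hr =>
    (hsmooth r hr).differentiableAt one_ne_zero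
  have hanti : AntitoneOn a (Ici 0) := antitoneOn_of_deriv_add_sq_nonpos (convex_Ici 0) hdiff hineq
  intro r hr
  obtain ⟨s, hrs, hs⟩ := exists_nonneg_of_deriv_add_sq_nonpos (t := r)
    (fun x hx => hdiff x (le_trans hr hx)) (fun x hx => hineq x (le_trans hr hx))
  exact ⟨hs.trans (hanti hr (le_trans hr hrs) hrs), hanti self_mem_Ici hr hr⟩
end
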